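/- arXiv:2406.16196 — 3 statements merged into one kernel-verified Lean document; each statement's English description precedes it below -/
import Mathlib

section
/- Let k be a positive integer and let S and S' be sets of positive integers such that every element of S and every element of S' is coprime to k. Then S and S' are division-equivalent if and only if S[k] and S'[k] are division-equivalent; that is, there exist positive integers r, r' with S/r = S'/r' if and only if there exist positive integers r, r' with (S[k])/r = (S'[k])/r'. -/
/-- For a set `S` of positive integers and a positive integer `r`,
`divSet S r = S/r = {s / gcd(r,s) : s ∈ S}`. -/
def divSet (S : Set ℕ) (r : ℕ) : Set ℕ := {x | ∃ s ∈ S, x = s / Nat.gcd r s}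

/-- For a set `S` of positive integers and `k` coprime to every element of `S`,
`brSet S k = S[k] = {s·k^i : s ∈ S, i ≥ 0}`. -/
def brSet (S : Set ℕ) (k : ℕ) : Set ℕ := {x | ∃ s ∈ S, ∃ i : ℕ, x = s * k ^ i}

-- Lemma A parts
lemma coprime_div_gcd_pow (k r : ℕ) (hk : 0 < k) (hr : 0 < r) :
    Nat.Coprime (r / Nat.gcd r (k ^ r)) k := by
  rw [Nat.coprime_iff_gcd_eq_one]
  by_contra h
  obtain ⟨p, hp, hpd⟩ := Nat.exists_prime_and_dvd h
  have hpr' : p ∣ r / Nat.gcd r (k ^ r) := hpd.trans (Nat.gcd_dvd_left _ _)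
  have hpk : p ∣ k := hpd.trans (Nat.gcd_dvd_right _ _)
  have hgd : Nat.gcd r (k ^ r) ∣ r := Nat.gcd_dvd_left _ _
  have hr0 : r ≠ 0 := hr.ne'
  have hk0 : k ≠ 0 := hk.ne'
  have hfac : (r / Nat.gcd r (k ^ r)).factorization p = 0 := by
    rw [Nat.factorization_div hgd]
    rw [Nat.factorization_gcd hr0 (pow_ne_zero _ hk0)]
    simp only [Finsupp.tsub_apply, Finsupp.inf_apply, Nat.factorization_pow,
      Finsupp.smul_apply, smul_eq_mul]
    have h1 : r.factorization p ≤ r * k.factorization p := by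
      have hkp : 1 ≤ k.factorization p :=
        (Nat.Prime.factorization_pos_of_dvd hp hk0 hpk)
      calc r.factorization p ≤ r := (Nat.factorization_lt p hr0).le
        _ = r * 1 := (mul_one r).symm
        _ ≤ r * k.factorization p := Nat.mul_le_mul_left r hkp
    omega
  have hpos : 0 < (r / Nat.gcd r (k ^ r)).factorization p := by
    apply Nat.Prime.factorization_pos_of_dvd hp _ hpr'
    exact Nat.ne_of_gt (Nat.div_pos (Nat.le_of_dvd hr hgd) (Nat.gcd_pos_of_pos_left _ hr))
  omega

lemma divSet_reduce (k r : ℕ) (hk : 0 < k) (hr : 0 < r) (S : Set ℕ)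
    (hS : ∀ s ∈ S, 0 < s ∧ Nat.Coprime s k) :
    divSet S r = divSet S (r / Nat.gcd r (k ^ r)) := by
  have hgd : Nat.gcd r (k ^ r) ∣ r := Nat.gcd_dvd_left _ _
  have key : ∀ s ∈ S, Nat.gcd r s = Nat.gcd (r / Nat.gcd r (k ^ r)) s := by
    intro s hs
    have hcop : Nat.Coprime (Nat.gcd r (k ^ r)) s := by
      have : Nat.Coprime s (k ^ r) := (hS s hs).2.pow_right _
      exact Nat.Coprime.coprime_dvd_left (Nat.gcd_dvd_right _ _) this.symm
    conv_lhs => rw [← Nat.div_mul_cancel hgd]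
    rw [Nat.Coprime.gcd_mul_right_cancel _ hcop]
  ext x
  constructor
  · rintro ⟨s, hs, rfl⟩; exact ⟨s, hs, by rw [key s hs]⟩
  · rintro ⟨s, hs, rfl⟩; exact ⟨s, hs, by rw [key s hs]⟩

-- Lemma B
lemma divSet_brSet_of_coprime (k r : ℕ) (hrk : Nat.Coprime r k) (S : Set ℕ)
    (hS : ∀ s ∈ S, 0 < s ∧ Nat.Coprime s k) :
    divSet (brSet S k) r = brSet (divSet S r) k := by
  ext x
  constructor
  · rintro ⟨-, ⟨s, hs, i, rfl⟩, rfl⟩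
    refine ⟨s / Nat.gcd r s, ⟨s, hs, rfl⟩, i, ?_⟩
    rw [Nat.Coprime.gcd_mul_right_cancel_right _ ((hrk.pow_right i).symm),
      mul_comm s (k ^ i), Nat.mul_div_assoc _ (Nat.gcd_dvd_right r s), mul_comm]
  · rintro ⟨-, ⟨s, hs, rfl⟩, i, rfl⟩
    refine ⟨s * k ^ i, ⟨s, hs, i, rfl⟩, ?_⟩
    rw [Nat.Coprime.gcd_mul_right_cancel_right _ ((hrk.pow_right i).symm),
      mul_comm s (k ^ i), Nat.mul_div_assoc _ (Nat.gcd_dvd_right r s), mul_comm]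

-- Lemma C
lemma divSet_eq_coprime_part (k r : ℕ) (hk : 0 < k) (S : Set ℕ)
    (hS : ∀ s ∈ S, 0 < s ∧ Nat.Coprime s k) :
    divSet S r = {x ∈ divSet (brSet S k) r | Nat.Coprime x k} := by
  ext x
  constructor
  · rintro ⟨s, hs, rfl⟩
    refine ⟨⟨s, ⟨s, hs, 0, by simp⟩, rfl⟩, ?_⟩
    exact Nat.Coprime.coprime_dvd_left (Nat.div_dvd_of_dvd (Nat.gcd_dvd_right r s)) (hS s hs).2
  · rintro ⟨⟨-, ⟨s, hs, i, rfl⟩, rfl⟩, hcop⟩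
    have hsk : Nat.Coprime s (k ^ i) := (hS s hs).2.pow_right _
    have hsplit : Nat.gcd r (s * k ^ i) = Nat.gcd r s * Nat.gcd r (k ^ i) :=
      Nat.Coprime.gcd_mul r hsk
    have hdiv : s * k ^ i / Nat.gcd r (s * k ^ i)
        = (s / Nat.gcd r s) * (k ^ i / Nat.gcd r (k ^ i)) := by
      rw [hsplit, Nat.div_mul_div_comm (Nat.gcd_dvd_right r s) (Nat.gcd_dvd_right r (k ^ i))]
    have hc1 : k ^ i / Nat.gcd r (k ^ i) = 1 := by
      set c := k ^ i / Nat.gcd r (k ^ i) with hc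
      have hcd : c ∣ k ^ i := Nat.div_dvd_of_dvd (Nat.gcd_dvd_right r (k ^ i))
      have hcx : c ∣ s * k ^ i / Nat.gcd r (s * k ^ i) := ⟨s / Nat.gcd r s, by rw [hdiv, mul_comm]⟩
      have : Nat.Coprime c k := Nat.Coprime.coprime_dvd_left hcx hcop
      have : Nat.Coprime c (k ^ i) := this.pow_right _
      exact (Nat.gcd_eq_left hcd).symm.trans this
    exact ⟨s, hs, by rw [hdiv, hc1, mul_one]⟩

theorem stmt0 (k : ℕ) (hk : 0 < k) (S S' : Set ℕ)
    (hS : ∀ s ∈ S, 0 < s ∧ Nat.Coprime s k)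
    (hS' : ∀ s ∈ S', 0 < s ∧ Nat.Coprime s k) :
    (∃ r r' : ℕ, 0 < r ∧ 0 < r' ∧ divSet S r = divSet S' r') ↔
      (∃ r r' : ℕ, 0 < r ∧ 0 < r' ∧ divSet (brSet S k) r = divSet (brSet S' k) r') := by
  constructor
  · rintro ⟨r, r', hr, hr', heq⟩
    have hg : Nat.gcd r (k ^ r) ∣ r := Nat.gcd_dvd_left _ _
    have hg' : Nat.gcd r' (k ^ r') ∣ r' := Nat.gcd_dvd_left _ _
    refine ⟨r / Nat.gcd r (k ^ r), r' / Nat.gcd r' (k ^ r'),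
      Nat.div_pos (Nat.le_of_dvd hr hg) (Nat.gcd_pos_of_pos_left _ hr),
      Nat.div_pos (Nat.le_of_dvd hr' hg') (Nat.gcd_pos_of_pos_left _ hr'), ?_⟩
    rw [divSet_brSet_of_coprime k _ (coprime_div_gcd_pow k r hk hr) S hS,
      divSet_brSet_of_coprime k _ (coprime_div_gcd_pow k r' hk hr') S' hS',
      ← divSet_reduce k r hk hr S hS, ← divSet_reduce k r' hk hr' S' hS', heq]
  · rintro ⟨r, r', hr, hr', heq⟩
    refine ⟨r, r', hr, hr', ?_⟩
    rw [divSet_eq_coprime_part k r hk S hS, divSet_eq_coprime_part k r' hk S' hS', heq]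
end

section
/- Let k be a positive integer and let S, S' be sets of positive integers with every element of S and of S' coprime to k. If r and r' are positive integers such that (S[k])/r = (S'[k])/r', then S/r = S'/r'. -/
theorem divSet_brSet_char (k : ℕ) (hk : 0 < k) (S : Set ℕ)
    (hS : ∀ s ∈ S, 0 < s ∧ Nat.Coprime s k) (r : ℕ) :
    divSet S r = {x ∈ divSet (brSet S k) r | Nat.Coprime x k} := by
  ext x
  constructor
  · rintro ⟨s, hs, rfl⟩
    refine ⟨⟨s, ⟨s, hs, 0, by simp⟩, rfl⟩, ?_⟩
    exact Nat.Coprime.coprime_dvd_left (Nat.div_dvd_of_dvd (Nat.gcd_dvd_right r s)) (hS s hs).2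
  · rintro ⟨⟨_, ⟨s, hs, i, rfl⟩, rfl⟩, hcop⟩
    obtain ⟨hspos, hsk⟩ := hS s hs
    have hcopski : Nat.Coprime s (k ^ i) := hsk.pow_right i
    have hgcd : Nat.gcd r (s * k ^ i) = Nat.gcd r s * Nat.gcd r (k ^ i) :=
      hcopski.gcd_mul r
    have hsplit : s * k ^ i / Nat.gcd r (s * k ^ i)
        = (s / Nat.gcd r s) * (k ^ i / Nat.gcd r (k ^ i)) := by
      rw [hgcd, Nat.div_mul_div_comm (Nat.gcd_dvd_right r s) (Nat.gcd_dvd_right r (k ^ i))]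
    set u := k ^ i / Nat.gcd r (k ^ i) with hu
    have hudvd : u ∣ k ^ i := Nat.div_dvd_of_dvd (Nat.gcd_dvd_right r (k ^ i))
    have hucop : Nat.Coprime u k := by
      rw [hsplit] at hcop
      exact (Nat.Coprime.coprime_dvd_left (Dvd.intro_left _ rfl) hcop)
    have hu1 : u = 1 := (hucop.pow_right i).eq_one_of_dvd hudvd
    refine ⟨s, hs, ?_⟩
    rw [hsplit, hu1, mul_one]

theorem stmt2 (k : ℕ) (hk : 0 < k) (S S' : Set ℕ)
    (hS : ∀ s ∈ S, 0 < s ∧ Nat.Coprime s k)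
    (hS' : ∀ s ∈ S', 0 < s ∧ Nat.Coprime s k)
    (r r' : ℕ) (hr : 0 < r) (hr' : 0 < r')
    (h : divSet (brSet S k) r = divSet (brSet S' k) r') :
    divSet S r = divSet S' r' := by
  rw [divSet_brSet_char k hk S hS r, divSet_brSet_char k hk S' hS' r', h]
end

section
/- Let m and n be coprime positive integers and let p be a prime dividing m. Define S₁ = {m^i : i ≥ 0}, and for each integer k ≥ 2 define S_k = {p·m^{ik} : i ≥ 0} ∪ {m^{ik+j} : i ≥ 0, 1 ≤ j ≤ k−1}. Then for all k ≠ l with k, l ≥ 1, the sets S_k[n] and S_l[n] are not division-equivalent: there exist no positive integers r, r' with (S_k[n])/r = (S_l[n])/r'. -/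
/-- The family of sets `S_k`: `S_1 = {m^i : i ≥ 0}` and, for `k ≥ 2`,
`S_k = {p·m^{ik} : i ≥ 0} ∪ {m^{ik+j} : i ≥ 0, 1 ≤ j ≤ k−1}`. -/
def SFam (p m : ℕ) (k : ℕ) : Set ℕ :=
  if k = 1 then {x | ∃ i : ℕ, x = m ^ i}
  else {x | ∃ i : ℕ, x = p * m ^ (i * k)} ∪
    {x | ∃ i j : ℕ, 1 ≤ j ∧ j ≤ k - 1 ∧ x = m ^ (i * k + j)}

/-!
Since every element of `S_k` divides a power of `m` and `m` is coprime to `n`, an equality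
`S_k[n]/r = S_l[n]/r'` forces `S_k/r = S_l/r'`. On elements divisible by a high power of `m`,
dividing by `gcd(r, s)` is dividing by the constant `gcd(r, m^r)`, so far out in the `m`-adic
sense `S_k` and `S_l` agree up to a fixed rational factor. Hence the exponents `d` for which
multiplication by `m^d` preserves the `m`-adic tail are the same for both sets; for `S_k` they
are exactly the multiples of `k`.
-/

lemma dvd_pow_self_of_dvd_pow {d m c : ℕ} (hm : m ≠ 0) (h : d ∣ m ^ c) : d ∣ m ^ d := by
  have hd : d ≠ 0 := ne_zero_of_dvd_ne_zero (pow_ne_zero _ hm) h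
  rw [← Nat.factorization_le_iff_dvd hd (pow_ne_zero _ hm)] at h ⊢
  intro q
  rcases Nat.eq_zero_or_pos (d.factorization q) with h0 | hpos
  · simp [h0]
  have hmq : 0 < m.factorization q := by
    have := hpos.trans_le (h q)
    simp only [Nat.factorization_pow, Finsupp.smul_apply, smul_eq_mul] at this
    exact Nat.pos_of_mul_pos_left this
  calc d.factorization q ≤ d := (Nat.factorization_lt q hd).le
    _ ≤ d * m.factorization q := Nat.le_mul_of_pos_right d hmq
    _ = (m ^ d).factorization q := by simp [Nat.factorization_pow]

lemma gcd_eq_gcd_pow_of_dvd {r m s c : ℕ} (hr : 0 < r) (hm : m ≠ 0) (hs : s ∣ m ^ c)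
    (hrs : m ^ r ∣ s) : Nat.gcd r s = Nat.gcd r (m ^ r) := by
  have hg : Nat.gcd r s ∣ m ^ r :=
    (dvd_pow_self_of_dvd_pow hm ((Nat.gcd_dvd_right r s).trans hs)).trans
      (pow_dvd_pow m (Nat.le_of_dvd hr (Nat.gcd_dvd_left r s)))
  exact Nat.dvd_antisymm (Nat.dvd_gcd (Nat.gcd_dvd_left r s) hg)
    (Nat.dvd_gcd (Nat.gcd_dvd_left _ _) ((Nat.gcd_dvd_right _ _).trans hrs))

lemma divSet_subset_of_divSet_brSet_subset {m n r r' : ℕ} {S S' : Set ℕ}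
    (hmn : Nat.Coprime m n) (hS : ∀ s ∈ S, ∃ c, s ∣ m ^ c) (hS' : ∀ s ∈ S', ∃ c, s ∣ m ^ c)
    (h : divSet (brSet S n) r ⊆ divSet (brSet S' n) r') : divSet S r ⊆ divSet S' r' := by
  rintro _ ⟨s, hs, rfl⟩
  obtain ⟨_, ⟨s', hs', e, rfl⟩, hx⟩ := h ⟨s, ⟨s, hs, 0, by simp⟩, rfl⟩
  obtain ⟨c, hc⟩ := hS s hs
  obtain ⟨c', hc'⟩ := hS' s' hs'
  have hcop : s'.Coprime (n ^ e) := Nat.Coprime.coprime_dvd_left hc' (hmn.pow c' e)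
  rw [hcop.gcd_mul r', ← Nat.div_mul_div_comm (Nat.gcd_dvd_right _ _) (Nat.gcd_dvd_right _ _)]
    at hx
  have hunit : n ^ e / Nat.gcd r' (n ^ e) = 1 := by
    refine Nat.eq_one_of_dvd_coprimes (a := s / Nat.gcd r s) ?_ (hx ▸ dvd_mul_left _ _)
      (Nat.div_dvd_of_dvd (Nat.gcd_dvd_right _ _))
    exact Nat.Coprime.coprime_dvd_left ((Nat.div_dvd_of_dvd (Nat.gcd_dvd_right r s)).trans hc)
      (hmn.pow c e)
  exact ⟨s', hs', by rw [hx, hunit, mul_one]⟩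

section Tail

variable {m r r' : ℕ} {S S' : Set ℕ}

lemma exists_mem_mul_gcd_eq_of_divSet_subset (hm : m ≠ 0) (hr : 0 < r) (hr' : 0 < r')
    (hS : ∀ s ∈ S, ∃ c, s ∣ m ^ c) (hS' : ∀ s ∈ S', ∃ c, s ∣ m ^ c)
    (h : divSet S r ⊆ divSet S' r') {s a : ℕ} (hs : s ∈ S) (hsa : m ^ (a + r' + r) ∣ s) :
    ∃ s' ∈ S', m ^ (a + r') ∣ s' ∧
      s * Nat.gcd r' (m ^ r') = s' * Nat.gcd r (m ^ r) := by
  obtain ⟨c, hc⟩ := hS s hs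
  have hg : Nat.gcd r s = Nat.gcd r (m ^ r) :=
    gcd_eq_gcd_pow_of_dvd hr hm hc ((pow_dvd_pow m (by omega)).trans hsa)
  have hgs : Nat.gcd r (m ^ r) ∣ s := hg ▸ Nat.gcd_dvd_right r s
  obtain ⟨s', hs', hx⟩ := h ⟨s, hs, by rw [hg]⟩
  have hquot : m ^ (a + r') ∣ s / Nat.gcd r (m ^ r) := by
    refine Nat.dvd_div_of_mul_dvd ((mul_dvd_mul_right (Nat.gcd_dvd_right r (m ^ r)) _).trans ?_)
    rwa [← pow_add, add_comm r]
  have hs'a : m ^ (a + r') ∣ s' := hquot.trans (hx ▸ Nat.div_dvd_of_dvd (Nat.gcd_dvd_right _ _))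
  obtain ⟨c', hc'⟩ := hS' s' hs'
  have hg' : Nat.gcd r' s' = Nat.gcd r' (m ^ r') :=
    gcd_eq_gcd_pow_of_dvd hr' hm hc' ((pow_dvd_pow m (by omega)).trans hs'a)
  refine ⟨s', hs', hs'a, ?_⟩
  rw [hg'] at hx
  calc s * Nat.gcd r' (m ^ r')
      = s / Nat.gcd r (m ^ r) * Nat.gcd r (m ^ r) * Nat.gcd r' (m ^ r') := by
        rw [Nat.div_mul_cancel hgs]
    _ = s' / Nat.gcd r' (m ^ r') * Nat.gcd r' (m ^ r') * Nat.gcd r (m ^ r) := by rw [hx]; ring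
    _ = s' * Nat.gcd r (m ^ r) := by rw [Nat.div_mul_cancel (hg' ▸ Nat.gcd_dvd_right r' s')]

def tailShifts (m : ℕ) (S : Set ℕ) : Set ℕ :=
  {d | ∃ E, ∀ s ∈ S, m ^ E ∣ s → m ^ d * s ∈ S}

lemma tailShifts_subset_of_divSet_eq (hm : m ≠ 0) (hr : 0 < r) (hr' : 0 < r')
    (hS : ∀ s ∈ S, ∃ c, s ∣ m ^ c) (hS' : ∀ s ∈ S', ∃ c, s ∣ m ^ c)
    (h : divSet S r = divSet S' r') : tailShifts m S' ⊆ tailShifts m S := by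
  rintro d ⟨E, hE⟩
  refine ⟨E + r + r' + r, fun s hs hsE => ?_⟩
  obtain ⟨s', hs', hs'E, hss'⟩ :=
    exists_mem_mul_gcd_eq_of_divSet_subset hm hr hr' hS hS' h.subset (a := E + r) hs hsE
  have hds' : m ^ d * s' ∈ S' := hE s' hs' ((pow_dvd_pow m (by omega)).trans hs'E)
  obtain ⟨s'', hs'', -, hs's''⟩ :=
    exists_mem_mul_gcd_eq_of_divSet_subset hm hr' hr hS' hS h.superset (a := 0) hds'
      (((pow_dvd_pow m (by omega)).trans hs'E).trans (dvd_mul_left _ _))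
  have hg' : 0 < Nat.gcd r' (m ^ r') := Nat.gcd_pos_of_pos_left _ hr'
  have hs''eq : s'' = m ^ d * s := by
    refine Nat.eq_of_mul_eq_mul_right hg' ?_
    rw [← hs's'', mul_assoc, mul_assoc, hss']
  exact hs''eq ▸ hs''

lemma tailShifts_eq_of_divSet_eq (hm : m ≠ 0) (hr : 0 < r) (hr' : 0 < r')
    (hS : ∀ s ∈ S, ∃ c, s ∣ m ^ c) (hS' : ∀ s ∈ S', ∃ c, s ∣ m ^ c)
    (h : divSet S r = divSet S' r') : tailShifts m S = tailShifts m S' :=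
  (tailShifts_subset_of_divSet_eq hm hr' hr hS' hS h.symm).antisymm
    (tailShifts_subset_of_divSet_eq hm hr hr' hS hS' h)

end Tail

section SFam

variable {p m k : ℕ}

lemma exists_dvd_pow_of_mem_SFam (hpm : p ∣ m) {s : ℕ} (hs : s ∈ SFam p m k) :
    ∃ c, s ∣ m ^ c := by
  unfold SFam at hs
  split_ifs at hs
  · obtain ⟨i, rfl⟩ := hs
    exact ⟨i, dvd_rfl⟩
  · rcases hs with ⟨i, rfl⟩ | ⟨i, j, -, -, rfl⟩
    · exact ⟨i * k + 1, by rw [pow_succ']; exact mul_dvd_mul_right hpm _⟩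
    · exact ⟨_, dvd_rfl⟩

lemma pow_mul_mem_SFam {d s : ℕ} (hkd : k ∣ d) (hs : s ∈ SFam p m k) :
    m ^ d * s ∈ SFam p m k := by
  obtain ⟨t, rfl⟩ := hkd
  unfold SFam at hs ⊢
  split_ifs at hs ⊢
  · obtain ⟨i, rfl⟩ := hs
    exact ⟨k * t + i, by ring⟩
  · rcases hs with ⟨i, rfl⟩ | ⟨i, j, hj1, hj2, rfl⟩
    · exact Or.inl ⟨i + t, by ring⟩
    · exact Or.inr ⟨i + t, j, hj1, hj2, by ring⟩

lemma eq_add_one_of_pow_eq_mul_pow (hp : p.Prime) (hm : 1 < m) {N a : ℕ}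
    (h : m ^ N = p * m ^ a) : N = a + 1 := by
  have ha : a ≤ N := (Nat.pow_dvd_pow_iff_le_right hm).mp (h ▸ dvd_mul_left _ _)
  obtain ⟨b, rfl⟩ := Nat.exists_eq_add_of_le ha
  rw [pow_add, mul_comm p] at h
  have hb : m ^ b = p := Nat.eq_of_mul_eq_mul_left (by positivity) h
  rw [((Nat.Prime.pow_eq_iff hp).mp hb).2]

lemma pow_mem_SFam_iff (hp : p.Prime) (hm : 1 < m) (hk : 2 ≤ k) {N : ℕ} :
    m ^ N ∈ SFam p m k ↔ ¬ k ∣ N := by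
  simp only [SFam, if_neg (show k ≠ 1 by omega), Set.mem_union, Set.mem_ofPred_eq]
  constructor
  · rintro (⟨i, hi⟩ | ⟨i, j, hj1, hj2, hi⟩)
    · rw [eq_add_one_of_pow_eq_mul_pow hp hm hi, Nat.dvd_add_right (dvd_mul_left k i)]
      exact fun h => by have := Nat.le_of_dvd one_pos h; omega
    · rw [Nat.pow_right_injective hm hi, Nat.dvd_add_right (dvd_mul_left k i)]
      exact fun h => by have := Nat.le_of_dvd hj1 h; omega
  · intro hN
    have hmod : N % k ≠ 0 := fun h => hN (Nat.dvd_of_mod_eq_zero h)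
    have hlt : N % k < k := Nat.mod_lt N (by omega)
    exact Or.inr ⟨N / k, N % k, by omega, by omega, by rw [Nat.div_add_mod']⟩

lemma tailShifts_SFam (hp : p.Prime) (hm : 1 < m) (hk : 0 < k) :
    tailShifts m (SFam p m k) = {d | k ∣ d} := by
  ext d
  refine ⟨fun ⟨E, hE⟩ => ?_, fun hkd => ⟨0, fun s hs _ => pow_mul_mem_SFam hkd hs⟩⟩
  obtain rfl | hk2 : k = 1 ∨ 2 ≤ k := by omega
  · exact one_dvd d
  by_contra hkd
  -- With `N ≥ E` and `N ≡ -d (mod k)`, `m ^ N ∈ S_k` but `m ^ (d + N) ∉ S_k`.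
  set N := k * (E + d + 1) - d
  have hle : E + d + 1 ≤ k * (E + d + 1) := Nat.le_mul_of_pos_left _ hk
  have hNd : N + d = k * (E + d + 1) := Nat.sub_add_cancel (by omega)
  have hN : ¬ k ∣ N := fun h => hkd ((Nat.dvd_add_right h).mp (hNd ▸ dvd_mul_right _ _))
  have hdN := hE (m ^ N) ((pow_mem_SFam_iff hp hm hk2).mpr hN) (pow_dvd_pow m (by omega))
  rw [← pow_add, pow_mem_SFam_iff hp hm hk2, add_comm, hNd] at hdN
  exact hdN (dvd_mul_right _ _)

end SFam

theorem stmt6_general (m n : ℕ) (hm : 0 < m) (hmn : Nat.Coprime m n)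
    (p : ℕ) (hp : p.Prime) (hpm : p ∣ m)
    (k l : ℕ) (hk : 1 ≤ k) (hl : 1 ≤ l) (hkl : k ≠ l) :
    ¬ ∃ r r' : ℕ, 0 < r ∧ 0 < r' ∧
      divSet (brSet (SFam p m k) n) r = divSet (brSet (SFam p m l) n) r' := by
  rintro ⟨r, r', hr, hr', h⟩
  have hm1 : 1 < m := hp.one_lt.trans_le (Nat.le_of_dvd hm hpm)
  have hSk := fun s (hs : s ∈ SFam p m k) => exists_dvd_pow_of_mem_SFam hpm hs
  have hSl := fun s (hs : s ∈ SFam p m l) => exists_dvd_pow_of_mem_SFam hpm hs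
  have hdiv : divSet (SFam p m k) r = divSet (SFam p m l) r' :=
    (divSet_subset_of_divSet_brSet_subset hmn hSk hSl h.subset).antisymm
      (divSet_subset_of_divSet_brSet_subset hmn hSl hSk h.superset)
  have hshift := tailShifts_eq_of_divSet_eq hm.ne' hr hr' hSk hSl hdiv
  rw [tailShifts_SFam hp hm1 hk, tailShifts_SFam hp hm1 hl] at hshift
  exact hkl (Nat.dvd_antisymm ((Set.ext_iff.mp hshift l).mpr dvd_rfl)
    ((Set.ext_iff.mp hshift k).mp dvd_rfl))

theorem stmt6 (m n : ℕ) (hm : 0 < m) (hn : 0 < n) (hmn : Nat.Coprime m n)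
    (p : ℕ) (hp : p.Prime) (hpm : p ∣ m)
    (k l : ℕ) (hk : 1 ≤ k) (hl : 1 ≤ l) (hkl : k ≠ l) :
    ¬ ∃ r r' : ℕ, 0 < r ∧ 0 < r' ∧
      divSet (brSet (SFam p m k) n) r = divSet (brSet (SFam p m l) n) r' :=
  stmt6_general m n hm hmn p hp hpm k l hk hl hkl
end
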